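/- In the CHSH game where Alice's response to question A = 0 is fixed to X = 0, the maximum winning probability of any non-signaling strategy is 3/4, equal to the classical value. That is, for any non-signaling conditional distribution p(x,y|a,b) on bits with Σ_y p(0,y|0,b) = 1 for all b, the average over uniform a,b of Σ_{x,y : x XOR y = a·b} p(x,y|a,b) is at most 3/4. -/

import Mathlib

/-!
On each question pair the players' answers form a distribution on two bits whose marginals are,
by non-signaling, Alice's `α_a = P(x = 0 | a)` and Bob's `β_b = P(y = 0 | b)`. Winning with `x = y`
forces the mass `|α_a - β_b|` off the diagonal, winning with `x ≠ y` forces `|α_a + β_b - 1|` onto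
it. With `α_0 = 1` the four lower bounds `1 - β_0`, `1 - β_1`, `β_0 - α_1`, `α_1 + β_1 - 1` on the
losing probabilities sum to `1`, so at least one game in four is lost.
-/

namespace CHSH

section

variable {R : Type*} [AddCommMonoid R]

def winProb (q : Bool → Bool → R) (c : Bool) : R :=
  ∑ x : Bool, ∑ y : Bool, if xor x y = c then q x y else 0

theorem winProb_false (q : Bool → Bool → R) : winProb q false = q false false + q true true := by
  simp [winProb, add_comm]

theorem winProb_true (q : Bool → Bool → R) : winProb q true = q false true + q true false := by
  simp [winProb, add_comm]

end

variable {R : Type*} [CommRing R] [LinearOrder R] [IsStrictOrderedRing R]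
  {q : Bool → Bool → R} {α β : R}

theorem winProb_false_le (hq : ∀ x y, 0 ≤ q x y) (hsum : ∑ x, ∑ y, q x y = 1)
    (hα : ∑ y, q false y = α) (hβ : ∑ x, q x false = β) :
    winProb q false ≤ 1 - |α - β| := by
  simp only [Fintype.sum_bool] at hsum hα hβ
  rw [winProb_false, le_sub_comm, abs_le]
  constructor <;> linarith [hq false true, hq true false]

theorem winProb_true_le (hq : ∀ x y, 0 ≤ q x y) (hsum : ∑ x, ∑ y, q x y = 1)
    (hα : ∑ y, q false y = α) (hβ : ∑ x, q x false = β) :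
    winProb q true ≤ 1 - |α + β - 1| := by
  simp only [Fintype.sum_bool] at hsum hα hβ
  rw [winProb_true, le_sub_comm, abs_le]
  constructor <;> linarith [hq false false, hq true true]

end CHSH

open CHSH

theorem chsh_nonsignaling_fixed_response
    (p : Bool → Bool → Bool → Bool → ℝ)
    (hnn : ∀ a b x y, 0 ≤ p a b x y)
    (hsum : ∀ a b, ∑ x : Bool, ∑ y : Bool, p a b x y = 1)
    (hnsA : ∀ a b b' x, ∑ y : Bool, p a b x y = ∑ y : Bool, p a b' x y)
    (hnsB : ∀ a a' b y, ∑ x : Bool, p a b x y = ∑ x : Bool, p a' b x y)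
    (hfix : ∀ b, ∑ y : Bool, p false b false y = 1) :
    (1/4 : ℝ) * ∑ a : Bool, ∑ b : Bool, ∑ x : Bool, ∑ y : Bool,
      (if xor x y = (a && b) then p a b x y else 0) ≤ 3/4 := by
  set α := ∑ y, p true false false y
  set β : Bool → ℝ := fun b ↦ ∑ x, p false b x false
  have h0 (b : Bool) : winProb (p false b) false ≤ 1 - |1 - β b| :=
    winProb_false_le (hnn _ _) (hsum _ _) (hfix b) rfl
  have h10 : winProb (p true false) false ≤ 1 - |α - β false| :=
    winProb_false_le (hnn _ _) (hsum _ _) rfl (hnsB _ _ _ _)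
  have h11 : winProb (p true true) true ≤ 1 - |α + β true - 1| :=
    winProb_true_le (hnn _ _) (hsum _ _) (hnsA _ _ _ _) (hnsB _ _ _ _)
  change (1/4 : ℝ) * ∑ a : Bool, ∑ b : Bool, winProb (p a b) (a && b) ≤ 3/4
  simp only [Fintype.sum_bool, Bool.and_self, Bool.and_false, Bool.false_and]
  linarith [h0 false, h0 true, le_abs_self (1 - β false), le_abs_self (1 - β true),
    neg_abs_le (α - β false), le_abs_self (α + β true - 1)]
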